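/- arXiv:2301.13586 — 2 statements merged into one kernel-verified Lean document; each statement's English description precedes it below -/
import Mathlib

section
/- Let (𝒟ₙ) be a sequence of finite nonempty subsets of ℤ^d satisfying the regular growth condition: for every c ∈ ℤ^d, #(𝒟ₙ Δ (𝒟ₙ + c))/#𝒟ₙ → 0 as n → ∞. Fix positive integers m₁,…,m_d and residues jₖ ∈ {0,…,mₖ−1}. Let 𝒟ₙ^{(j,m)} = {(i₁,…,i_d) ∈ 𝒟ₙ : iₖ ≡ jₖ (mod mₖ) for all k}. Then #𝒟ₙ^{(j,m)}/#𝒟ₙ → 1/(m₁⋯m_d) as n → ∞. -/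
open Filter Finset

private lemma emod_shift (a b t n : ℤ) : (a + t) % n = (b + t) % n ↔ a % n = b % n := by
  rw [Int.emod_eq_emod_iff_emod_sub_eq_zero, Int.emod_eq_emod_iff_emod_sub_eq_zero]
  have h : a + t - (b + t) = a - b := by ring
  rw [h]

private lemma card_filter_le_aux {α : Type*} [DecidableEq α] (A B : Finset α)
    (Q : α → Prop) [DecidablePred Q] :
    (A.filter Q).card ≤ (B.filter Q).card + (symmDiff A B).card := by
  have h1 : A.filter Q ⊆ (B.filter Q) ∪ (A \ B) := by
    intro x hx
    simp only [mem_filter, mem_union, mem_sdiff] at *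
    rw [Finset.mem_sdiff]; tauto
  have h2 := Finset.card_le_card h1
  have h3 := Finset.card_union_le (B.filter Q) (A \ B)
  have h4 : (A \ B).card ≤ (symmDiff A B).card := by
    apply Finset.card_le_card
    intro x hx
    rw [Finset.mem_symmDiff]
    rw [Finset.mem_sdiff] at hx
    tauto
  omega

private lemma abs_card_filter_sub_le {α : Type*} [DecidableEq α] (A B : Finset α)
    (Q : α → Prop) [DecidablePred Q] :
    |((A.filter Q).card : ℝ) - (B.filter Q).card| ≤ (symmDiff A B).card := by
  rw [abs_sub_le_iff]
  constructor
  · have h := card_filter_le_aux A B Q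
    have : ((A.filter Q).card : ℝ) ≤ (B.filter Q).card + (symmDiff A B).card := by
      exact_mod_cast h
    linarith
  · have h := card_filter_le_aux B A Q
    rw [symmDiff_comm] at h
    have : ((B.filter Q).card : ℝ) ≤ (A.filter Q).card + (symmDiff A B).card := by
      exact_mod_cast h
    linarith

theorem stmt_3 {d : ℕ} (D : ℕ → Finset (Fin d → ℤ))
    (hne : ∀ n, (D n).Nonempty)
    (hreg : ∀ c : Fin d → ℤ,
      Tendsto (fun n =>
          ((symmDiff (D n) ((D n).image (fun x => x + c))).card : ℝ) / (D n).card)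
        atTop (nhds 0))
    (m : Fin d → ℕ) (hm : ∀ k, 0 < m k)
    (j : Fin d → ℕ) (hj : ∀ k, j k < m k) :
    Tendsto (fun n =>
        (((D n).filter (fun x => ∀ k, x k % (m k : ℤ) = (j k : ℤ))).card : ℝ) / (D n).card)
      atTop (nhds (1 / ∏ k, (m k : ℝ))) := by
  classical
  set M : ℝ := ∏ k, (m k : ℝ) with hMdef
  have hMpos : 0 < M := Finset.prod_pos fun k _ => by exact_mod_cast hm k
  set P : (Fin d → ℤ) → (Fin d → ℤ) → Prop :=
    fun c x => ∀ k, x k % (m k : ℤ) = c k % (m k : ℤ) with hP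
  set g : (Fin d → ℤ) → ℕ → ℝ :=
    fun c n => ((D n).filter (P c)).card / (D n).card with hg
  have hcard : ∀ n, (0:ℝ) < (D n).card := fun n => by
    exact_mod_cast (hne n).card_pos
  -- translation bound
  have key : ∀ (c t : Fin d → ℤ) (n : ℕ),
      |g (c + t) n - g c n| ≤
        ((symmDiff (D n) ((D n).image (fun x => x + t))).card : ℝ) / (D n).card := by
    intro c t n
    have hinj : Function.Injective (fun x : Fin d → ℤ => x + t) :=
      fun a b hab => by simpa using add_left_injective t hab
    have e1 : (((D n).image (fun x => x + t)).filter (P (c + t))).card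
        = ((D n).filter (P c)).card := by
      rw [Finset.filter_image]
      rw [Finset.card_image_of_injective _ hinj]
      congr 1
      apply Finset.filter_congr
      intro x _
      simp only [hP, Function.comp, Pi.add_apply]
      constructor
      · intro h k
        exact (emod_shift (x k) (c k) (t k) (m k)).mp (h k)
      · intro h k
        exact (emod_shift (x k) (c k) (t k) (m k)).mpr (h k)
    have habs := abs_card_filter_sub_le (D n) ((D n).image (fun x => x + t)) (P (c + t))
    rw [e1] at habs
    have heq : |g (c + t) n - g c n|
        = |(((D n).filter (P (c + t))).card : ℝ) - ((D n).filter (P c)).card| / (D n).card := by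
      rw [hg]
      rw [div_sub_div_same, abs_div, abs_of_pos (hcard n)]
    rw [heq]
    exact div_le_div_of_nonneg_right habs (hcard n).le
  -- classes tend to each other
  have keyT : ∀ c c' : Fin d → ℤ, Tendsto (fun n => g c' n - g c n) atTop (nhds 0) := by
    intro c c'
    have hc' : c' = c + (c' - c) := by ring
    refine squeeze_zero_norm (fun n => ?_) (hreg (c' - c))
    rw [Real.norm_eq_abs]
    have h := key c (c' - c) n
    rwa [show c + (c' - c) = c' by ring] at h
  -- sum over residue classes
  set T : Finset (Fin d → ℕ) := Fintype.piFinset (fun k => Finset.range (m k)) with hT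
  have hsumcard : ∀ n, ∑ s ∈ T, ((D n).filter (P (fun k => (s k : ℤ)))).card = (D n).card := by
    intro n
    have hmem : ∀ x ∈ D n, (fun k => (x k % (m k : ℤ)).toNat) ∈ T := by
      intro x _
      rw [hT, Fintype.mem_piFinset]
      intro k
      rw [Finset.mem_range]
      have h1 : 0 ≤ x k % (m k : ℤ) := Int.emod_nonneg _ (by exact_mod_cast (hm k).ne')
      have h2 : x k % (m k : ℤ) < (m k : ℤ) := Int.emod_lt_of_pos _ (by exact_mod_cast hm k)
      omega
    have hfib := Finset.card_eq_sum_card_fiberwise hmem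
    rw [hfib]
    apply Finset.sum_congr rfl
    intro s hs
    congr 1
    apply Finset.filter_congr
    intro x _
    have hsk : ∀ k, s k < m k := by
      rw [hT, Fintype.mem_piFinset] at hs
      intro k; simpa using hs k
    have hcast : ∀ k, ((s k : ℤ)) % (m k : ℤ) = (s k : ℤ) := fun k =>
      Int.emod_eq_of_lt (by positivity) (by exact_mod_cast hsk k)
    rw [funext_iff]
    constructor
    · intro h k
      have hk : x k % (m k : ℤ) = (s k : ℤ) % (m k : ℤ) := h k
      rw [hcast k] at hk
      rw [hk]
      simp
    · intro h k
      have hk := h k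
      have h1 : 0 ≤ x k % (m k : ℤ) := Int.emod_nonneg _ (by exact_mod_cast (hm k).ne')
      have h2 : x k % (m k : ℤ) = (s k : ℤ) := by
        rw [← hk, Int.toNat_of_nonneg h1]
      show x k % (m k : ℤ) = (s k : ℤ) % (m k : ℤ)
      rw [h2, hcast k]
  have hsum : ∀ n, ∑ s ∈ T, g (fun k => (s k : ℤ)) n = 1 := by
    intro n
    simp only [hg]
    rw [← Finset.sum_div, ← Nat.cast_sum, hsumcard n]
    exact div_self (hcard n).ne'
  have hTcard : (T.card : ℝ) = M := by
    rw [hT, hMdef]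
    simp [Fintype.card_piFinset]
  -- the statement function equals g (j : ℤ)
  have hfilt : ∀ n, (D n).filter (fun x => ∀ k, x k % (m k : ℤ) = (j k : ℤ))
      = (D n).filter (P (fun k => (j k : ℤ))) := by
    intro n
    apply Finset.filter_congr
    intro x _
    have hjm : ∀ k, ((j k : ℤ)) % (m k : ℤ) = (j k : ℤ) := by
      intro k
      apply Int.emod_eq_of_lt (by positivity) (by exact_mod_cast hj k)
    simp only [hP]
    constructor
    · intro h k; rw [hjm k]; exact h k
    · intro h k; rw [← hjm k]; exact h k
  -- conclusion
  have hdiff : Tendsto (fun n => ∑ s ∈ T, (g (fun k => (j k : ℤ)) n - g (fun k => (s k : ℤ)) n))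
      atTop (nhds 0) := by
    have := tendsto_finset_sum T (fun s _ => keyT (fun k => (s k : ℤ)) (fun k => (j k : ℤ)))
    simpa using this
  have hrw : ∀ n, g (fun k => (j k : ℤ)) n - 1 / M
      = (1 / M) * ∑ s ∈ T, (g (fun k => (j k : ℤ)) n - g (fun k => (s k : ℤ)) n) := by
    intro n
    rw [Finset.sum_sub_distrib, Finset.sum_const, hsum n, nsmul_eq_mul, hTcard]
    field_simp
  have hlim : Tendsto (fun n => g (fun k => (j k : ℤ)) n - 1 / M) atTop (nhds 0) := by
    simp_rw [hrw]
    have := hdiff.const_mul (1 / M)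
    simpa using this
  have hfinal : Tendsto (fun n => g (fun k => (j k : ℤ)) n) atTop (nhds (1 / M)) := by
    have h2 := hlim.add_const (1 / M)
    simp only [sub_add_cancel, zero_add] at h2
    exact h2
  refine hfinal.congr ?_
  intro n
  rw [hfilt n]
end

section
/- The number of lattice points in the dilated simplex: with a₁,…,a_d > 0 fixed reals and 𝒯ₙ = {x ∈ ℕ^d : a₁x₁ + ⋯ + a_d x_d ≤ n}, one has #𝒯ₙ / n^d → 1/(d! a₁⋯a_d) as n → ∞. -/
open Filter

/-- The set of positive-integer lattice points in the simplex `∑ aᵢ xᵢ ≤ t`. -/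
def Sset {d : ℕ} (a : Fin d → ℝ) (t : ℝ) : Set (Fin d → ℕ) :=
  {x | (∀ i, 0 < x i) ∧ ∑ i, a i * x i ≤ t}

lemma Sset_term_le {d : ℕ} {a : Fin d → ℝ} (ha : ∀ i, 0 < a i) {t : ℝ}
    {x : Fin d → ℕ} (hx : x ∈ Sset a t) (i : Fin d) : a i * x i ≤ t := by
  refine le_trans ?_ hx.2
  exact Finset.single_le_sum (f := fun j => a j * (x j : ℝ))
    (fun j _ => mul_nonneg (ha j).le (Nat.cast_nonneg _)) (Finset.mem_univ i)

lemma Sset_finite {d : ℕ} {a : Fin d → ℝ} (ha : ∀ i, 0 < a i) (t : ℝ) :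
    (Sset a t).Finite := by
  refine Set.Finite.subset
    (Set.Finite.pi (fun i : Fin d => Set.finite_Icc 0 ⌊t / a i⌋₊)) ?_
  intro x hx
  rw [Set.mem_pi]
  intro i _
  refine Set.mem_Icc.2 ⟨Nat.zero_le _, Nat.le_floor ?_⟩
  rw [le_div_iff₀ (ha i)]
  have := Sset_term_le ha hx i
  linarith [this]

/-- Fiber decomposition of the lattice-point set over the first coordinate. -/
noncomputable def SsetEquiv {d : ℕ} (a : Fin (d+1) → ℝ) (ha : ∀ i, 0 < a i) (t : ℝ) :
    Sset a t ≃ (Σ k : (Finset.Icc 1 ⌊t / a 0⌋₊ : Finset ℕ),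
      Sset (Fin.tail a) (t - a 0 * k)) where
  toFun x := by
    refine ⟨⟨x.1 0, ?_⟩, ⟨Fin.tail x.1, ?_, ?_⟩⟩
    · refine Finset.mem_Icc.2 ⟨x.2.1 0, Nat.le_floor ?_⟩
      rw [le_div_iff₀ (ha 0)]
      have := Sset_term_le ha x.2 0
      linarith
    · intro i; exact x.2.1 _
    · have hs : ∑ i, a i * (x.1 i : ℝ) = a 0 * x.1 0 + ∑ i : Fin d, Fin.tail a i * (Fin.tail x.1 i : ℝ) := by
        rw [Fin.sum_univ_succ]; rfl
      have := x.2.2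
      rw [hs] at this
      linarith
  invFun p := by
    refine ⟨Fin.cons p.1 p.2.1, ?_, ?_⟩
    · intro i
      refine Fin.cases ?_ ?_ i
      · simpa using Nat.lt_of_lt_of_le Nat.zero_lt_one (Finset.mem_Icc.1 p.1.2).1
      · intro j; simpa using p.2.2.1 j
    · rw [Fin.sum_univ_succ]
      have h2 := p.2.2.2
      simp only [Fin.cons_zero, Fin.cons_succ]
      have : ∑ i : Fin d, a i.succ * ((p.2.1 i : ℕ) : ℝ) = ∑ i : Fin d, Fin.tail a i * (p.2.1 i : ℝ) := rfl
      rw [this]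
      linarith
  left_inv x := by
    ext i
    exact congrFun (Fin.cons_self_tail x.1) i
  right_inv p := by
    refine Sigma.subtype_ext ?_ ?_
    · simp
    · simp [Fin.tail_cons]

lemma Sset_card_succ {d : ℕ} (a : Fin (d+1) → ℝ) (ha : ∀ i, 0 < a i) (t : ℝ) :
    Nat.card (Sset a t) =
      ∑ k ∈ Finset.Icc 1 ⌊t / a 0⌋₊, Nat.card (Sset (Fin.tail a) (t - a 0 * k)) := by
  haveI : ∀ k : (Finset.Icc 1 ⌊t / a 0⌋₊ : Finset ℕ),
      Fintype (Sset (Fin.tail a) (t - a 0 * k)) :=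
    fun k => (Sset_finite (fun i => ha i.succ) _).fintype
  rw [Nat.card_congr (SsetEquiv a ha t), Nat.card_eq_fintype_card, Fintype.card_sigma,
    ← Finset.sum_coe_sort (Finset.Icc 1 ⌊t / a 0⌋₊)
      (fun k => Nat.card (Sset (Fin.tail a) (t - a 0 * k)))]
  congr 1
  ext k
  rw [Nat.card_eq_fintype_card]

/-- Key inequality: `(n+1) y^n (x - y) ≤ x^(n+1) - y^(n+1)` for `0 ≤ y ≤ x`. -/
lemma key_low {x y : ℝ} (hy : 0 ≤ y) (hxy : y ≤ x) (n : ℕ) :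
    (n + 1 : ℝ) * y ^ n * (x - y) ≤ x ^ (n+1) - y ^ (n+1) := by
  rw [← geom_sum₂_mul x y (n+1)]
  have h1 : (n + 1 : ℝ) * y ^ n ≤ ∑ i ∈ Finset.range (n+1), x ^ i * y ^ (n - i) := by
    calc (n + 1 : ℝ) * y ^ n = ∑ _i ∈ Finset.range (n+1), y ^ n := by
          rw [Finset.sum_const, Finset.card_range, nsmul_eq_mul]; push_cast; ring
      _ ≤ _ := by
          refine Finset.sum_le_sum fun i hi => ?_
          have hin : i + (n - i) = n := Nat.add_sub_cancel' (Nat.lt_succ_iff.1 (Finset.mem_range.1 hi))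
          calc y ^ n = y ^ i * y ^ (n - i) := by rw [← pow_add, hin]
            _ ≤ x ^ i * y ^ (n - i) :=
              mul_le_mul_of_nonneg_right (pow_le_pow_left₀ hy hxy i) (pow_nonneg hy _)
  exact mul_le_mul_of_nonneg_right h1 (by linarith)

/-- Key inequality: `x^(n+1) - y^(n+1) ≤ (n+1) x^n (x - y)` for `0 ≤ y ≤ x`. -/
lemma key_high {x y : ℝ} (hy : 0 ≤ y) (hxy : y ≤ x) (n : ℕ) :
    x ^ (n+1) - y ^ (n+1) ≤ (n + 1 : ℝ) * x ^ n * (x - y) := by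
  rw [← geom_sum₂_mul x y (n+1)]
  have h1 : ∑ i ∈ Finset.range (n+1), x ^ i * y ^ (n - i) ≤ (n + 1 : ℝ) * x ^ n := by
    calc ∑ i ∈ Finset.range (n+1), x ^ i * y ^ (n - i)
        ≤ ∑ _i ∈ Finset.range (n+1), x ^ n := by
          refine Finset.sum_le_sum fun i hi => ?_
          have hin : i + (n - i) = n := Nat.add_sub_cancel' (Nat.lt_succ_iff.1 (Finset.mem_range.1 hi))
          calc x ^ i * y ^ (n - i) ≤ x ^ i * x ^ (n - i) :=
                mul_le_mul_of_nonneg_left (pow_le_pow_left₀ hy hxy _) (pow_nonneg (hy.trans hxy) _)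
            _ = x ^ n := by rw [← pow_add, hin]
      _ = (n + 1 : ℝ) * x ^ n := by
          rw [Finset.sum_const, Finset.card_range, nsmul_eq_mul]; push_cast; ring
  exact mul_le_mul_of_nonneg_right h1 (by linarith)

lemma Sset_upper : ∀ (d : ℕ) (a : Fin d → ℝ), (∀ i, 0 < a i) → ∀ t : ℝ, 0 ≤ t →
    (Nat.card (Sset a t) : ℝ) * (d.factorial * ∏ i, a i) ≤ t ^ d := by
  intro d
  induction d with
  | zero =>
      intro a ha t ht
      have : Sset a t = Set.univ := by
        ext x
        simp [Sset, ht]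
      rw [this]
      simp
  | succ d ih =>
      intro a ha t ht
      set a0 := a 0 with ha0def
      have ha0 : 0 < a0 := ha 0
      set K := ⌊t / a0⌋₊ with hK
      rw [Sset_card_succ a ha t]
      have hprod : (∏ i, a i) = a0 * ∏ i : Fin d, Fin.tail a i := by
        rw [Fin.prod_univ_succ]; rfl
      have hfac : ((d+1).factorial : ℝ) = ((d:ℝ)+1) * d.factorial := by
        rw [Nat.factorial_succ]; push_cast; ring
      push_cast
      rw [Finset.sum_mul]
      have hstep : ∀ k ∈ Finset.Icc 1 K,
          (Nat.card (Sset (Fin.tail a) (t - a0 * k)) : ℝ) * (((d+1).factorial : ℝ) * ∏ i, a i)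
            ≤ (t - a0 * (k-1 : ℕ)) ^ (d+1) - (t - a0 * k) ^ (d+1) := by
        intro k hk
        obtain ⟨hk1, hk2⟩ := Finset.mem_Icc.1 hk
        have hkt : a0 * k ≤ t := by
          have h1 : (k : ℝ) ≤ t / a0 := by
            exact_mod_cast Nat.le_floor_iff (by positivity) |>.1 (by exact_mod_cast hk2)
          calc a0 * k ≤ a0 * (t / a0) := by nlinarith
            _ = t := by field_simp
        have hy : (0:ℝ) ≤ t - a0 * k := by linarith
        have hc1 : ((k - 1 : ℕ) : ℝ) = (k:ℝ) - 1 := by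
          rw [Nat.cast_sub hk1, Nat.cast_one]
        have hxy : t - a0 * k ≤ t - a0 * (k - 1 : ℕ) := by
          rw [hc1]; nlinarith
        have hIH := ih (Fin.tail a) (fun i => ha i.succ) (t - a0 * k) hy
        have hkey := key_low hy hxy d
        have hsub : t - a0 * (k-1:ℕ) - (t - a0 * k) = a0 := by
          rw [hc1]; ring
        rw [hsub] at hkey
        calc (Nat.card (Sset (Fin.tail a) (t - a0 * k)) : ℝ) * (((d+1).factorial : ℝ) * ∏ i, a i)
            = ((d:ℝ)+1) * ((Nat.card (Sset (Fin.tail a) (t - a0 * k)) : ℝ)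
                * (d.factorial * ∏ i : Fin d, Fin.tail a i)) * a0 := by
              rw [hprod, hfac]; ring
          _ ≤ ((d:ℝ)+1) * (t - a0 * k) ^ d * a0 := by
              have hd1 : (0:ℝ) ≤ (d:ℝ)+1 := by positivity
              have := mul_le_mul_of_nonneg_left hIH hd1
              exact mul_le_mul_of_nonneg_right this ha0.le
          _ ≤ _ := hkey
      refine le_trans (Finset.sum_le_sum hstep) ?_
      have htel : ∑ k ∈ Finset.Icc 1 K, ((t - a0 * (k-1:ℕ)) ^ (d+1) - (t - a0 * k) ^ (d+1))
          = t ^ (d+1) - (t - a0 * K) ^ (d+1) := by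
        rw [← Finset.Ico_add_one_right_eq_Icc, Finset.sum_Ico_eq_sum_range]
        have hcong : ∀ j ∈ Finset.range (K + 1 - 1),
            ((t - a0 * ((1 + j - 1 : ℕ)) : ℝ) ^ (d+1) - (t - a0 * (1 + j : ℕ)) ^ (d+1))
              = (fun m : ℕ => (t - a0 * m)^(d+1)) j - (fun m : ℕ => (t - a0 * m)^(d+1)) (j+1) := by
          intro j _
          have e1 : (1 + j - 1 : ℕ) = j := by omega
          have e2 : (1 + j : ℕ) = j + 1 := by omega
          rw [e1, e2]
        rw [Finset.sum_congr rfl hcong, Finset.sum_range_sub']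
        have : K + 1 - 1 = K := by omega
        rw [this]
        norm_num
      rw [htel]
      have hKt : a0 * K ≤ t := by
        rcases Nat.eq_zero_or_pos K with h0 | hpos
        · rw [h0]; simpa using ht
        · have h1 : (K : ℝ) ≤ t / a0 := Nat.floor_le (by positivity)
          calc a0 * K ≤ a0 * (t / a0) := by nlinarith
            _ = t := by field_simp
      nlinarith [pow_nonneg (by linarith : (0:ℝ) ≤ t - a0 * K) (d+1)]

lemma Sset_lower : ∀ (d : ℕ) (a : Fin d → ℝ), (∀ i, 0 < a i) → ∀ t : ℝ, (∑ i, a i) ≤ t →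
    (t - ∑ i, a i) ^ d ≤ (Nat.card (Sset a t) : ℝ) * (d.factorial * ∏ i, a i) := by
  intro d
  induction d with
  | zero =>
      intro a ha t ht
      have ht0 : (0:ℝ) ≤ t := le_trans (by simp) ht
      have : Sset a t = Set.univ := by
        ext x
        simp [Sset, ht0]
      rw [this]
      simp
  | succ d ih =>
      intro a ha t ht
      set a0 := a 0 with ha0def
      have ha0 : 0 < a0 := ha 0
      set A' : ℝ := ∑ i : Fin d, Fin.tail a i with hA'def
      have hA : ∑ i : Fin (d+1), a i = a0 + A' := by
        rw [Fin.sum_univ_succ]; rfl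
      have hA'0 : 0 ≤ A' :=
        Finset.sum_nonneg fun i _ => (ha i.succ).le
      rw [hA] at ht ⊢
      set K := ⌊t / a0⌋₊ with hK
      set m := ⌊(t - A') / a0⌋₊ with hm
      have hprodtail : (0:ℝ) < ∏ i : Fin d, Fin.tail a i :=
        Finset.prod_pos fun i _ => ha i.succ
      have hprod : (∏ i, a i) = a0 * ∏ i : Fin d, Fin.tail a i := by
        rw [Fin.prod_univ_succ]; rfl
      have hfac : ((d+1).factorial : ℝ) = ((d:ℝ)+1) * d.factorial := by
        rw [Nat.factorial_succ]; push_cast; ring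
      have hm1 : 1 ≤ m := by
        refine Nat.le_floor ?_
        rw [Nat.cast_one, le_div_iff₀ ha0]
        linarith
      have hmK : m ≤ K := by
        refine Nat.floor_le_floor ?_
        gcongr
        linarith
      rw [Sset_card_succ a ha t]
      push_cast
      rw [Finset.sum_mul]
      set g : ℕ → ℝ := fun j => (max (t - A' - a0 * j) 0) ^ (d+1) with hg
      have hstep : ∀ k ∈ Finset.Icc 1 m,
          g k - g (k+1) ≤ (Nat.card (Sset (Fin.tail a) (t - a0 * k)) : ℝ)
            * (((d+1).factorial : ℝ) * ∏ i, a i) := by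
        intro k hk
        obtain ⟨hk1, hk2⟩ := Finset.mem_Icc.1 hk
        have hkm : (k : ℝ) ≤ (t - A') / a0 := by
          calc (k:ℝ) ≤ m := by exact_mod_cast hk2
            _ ≤ (t - A') / a0 := Nat.floor_le (by
                rw [le_div_iff₀ ha0]; nlinarith)
        have hb : (0:ℝ) ≤ t - A' - a0 * k := by
          have := (le_div_iff₀ ha0).1 hkm
          nlinarith
        have hgk : g k = (t - A' - a0 * k) ^ (d+1) := by
          rw [hg]; simp only [max_eq_left hb]
        have hcast : ((k+1:ℕ):ℝ) = (k:ℝ) + 1 := by push_cast; ring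
        have hyb : max (t - A' - a0 * ((k:ℝ)+1)) 0 ≤ t - A' - a0 * k := by
          refine max_le (by nlinarith) hb
        have hgk1 : g (k+1) = (max (t - A' - a0 * ((k:ℝ)+1)) 0) ^ (d+1) := by
          rw [hg]; simp only [hcast]
        have hIH := ih (Fin.tail a) (fun i => ha i.succ) (t - a0 * k) (by
          rw [← hA'def]; linarith)
        have hsum_eq : t - a0 * k - A' = t - A' - a0 * k := by ring
        rw [← hA'def, hsum_eq] at hIH
        have hdiff : t - A' - a0 * k - max (t - A' - a0 * ((k:ℝ)+1)) 0 ≤ a0 := by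
          have := le_max_left (t - A' - a0 * ((k:ℝ)+1)) 0
          nlinarith
        calc g k - g (k+1)
            = (t - A' - a0 * k) ^ (d+1) - (max (t - A' - a0 * ((k:ℝ)+1)) 0) ^ (d+1) := by
              rw [hgk, hgk1]
          _ ≤ ((d:ℝ)+1) * (t - A' - a0*k) ^ d
                * (t - A' - a0 * k - max (t - A' - a0 * ((k:ℝ)+1)) 0) := by
              have := key_high (x := t - A' - a0 * k) (y := max (t - A' - a0 * ((k:ℝ)+1)) 0)
                (le_max_right _ _) hyb d
              exact this
          _ ≤ ((d:ℝ)+1) * (t - A' - a0*k) ^ d * a0 := by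
              have hp : (0:ℝ) ≤ ((d:ℝ)+1) * (t - A' - a0*k) ^ d := by positivity
              exact mul_le_mul_of_nonneg_left hdiff hp
          _ ≤ ((d:ℝ)+1) * ((Nat.card (Sset (Fin.tail a) (t - a0 * k)) : ℝ)
                * (d.factorial * ∏ i : Fin d, Fin.tail a i)) * a0 := by
              have hd1 : (0:ℝ) ≤ (d:ℝ)+1 := by positivity
              have := mul_le_mul_of_nonneg_left hIH hd1
              exact mul_le_mul_of_nonneg_right this ha0.le
          _ = (Nat.card (Sset (Fin.tail a) (t - a0 * k)) : ℝ)
                * (((d+1).factorial : ℝ) * ∏ i, a i) := by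
              rw [hprod, hfac]; ring
      have htel : ∑ k ∈ Finset.Icc 1 m, (g k - g (k+1)) = g 1 - g (m+1) := by
        rw [← Finset.Ico_add_one_right_eq_Icc, Finset.sum_Ico_eq_sum_range]
        have hcong : ∀ j ∈ Finset.range (m + 1 - 1),
            g (1+j) - g (1+j+1)
              = (fun i : ℕ => g (i+1)) j - (fun i : ℕ => g (i+1)) (j+1) := by
          intro j _
          simp only [show 1 + j = j + 1 from by omega]
        rw [Finset.sum_congr rfl hcong, Finset.sum_range_sub']
        have : m + 1 - 1 = m := by omega
        rw [this]
      have hg1 : g 1 = (t - (a0 + A')) ^ (d+1) := by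
        rw [hg]
        simp only [Nat.cast_one, mul_one]
        rw [max_eq_left (by linarith)]
        ring_nf
      have hgm1 : g (m+1) = 0 := by
        have hlt : t - A' - a0 * ((m:ℝ)+1) < 0 := by
          have h1 : (t - A') / a0 < (m:ℝ) + 1 := by
            exact_mod_cast Nat.lt_floor_add_one ((t - A') / a0)
          rw [div_lt_iff₀ ha0] at h1
          nlinarith
        simp only [hg]
        push_cast
        rw [max_eq_right (by linarith)]
        simp
      calc (t - (a0 + A')) ^ (d+1) = g 1 - g (m+1) := by rw [hg1, hgm1]; ring
        _ = ∑ k ∈ Finset.Icc 1 m, (g k - g (k+1)) := htel.symm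
        _ ≤ ∑ k ∈ Finset.Icc 1 m, (Nat.card (Sset (Fin.tail a) (t - a0 * k)) : ℝ)
              * (((d+1).factorial : ℝ) * ∏ i, a i) := Finset.sum_le_sum hstep
        _ ≤ ∑ k ∈ Finset.Icc 1 K, (Nat.card (Sset (Fin.tail a) (t - a0 * k)) : ℝ)
              * (((d+1).factorial : ℝ) * ∏ i, a i) := by
            refine Finset.sum_le_sum_of_subset_of_nonneg
              (Finset.Icc_subset_Icc_right hmK) ?_
            intro k _ _
            have hppos : (0:ℝ) < ∏ i, a i := Finset.prod_pos fun i _ => ha i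
            positivity

theorem stmt_19 {d : ℕ} (a : Fin d → ℝ) (ha : ∀ i, 0 < a i)
    (T : ℕ → Finset (Fin d → ℕ))
    (hT : ∀ (n : ℕ) (x : Fin d → ℕ),
      x ∈ T n ↔ (∀ i, 0 < x i) ∧ ∑ i, a i * x i ≤ n) :
    Tendsto (fun n => ((T n).card : ℝ) / (n : ℝ) ^ d) atTop
      (nhds (1 / (d.factorial * ∏ i, a i))) := by
  have hppos : (0:ℝ) < ∏ i, a i := Finset.prod_pos fun i _ => ha i
  have hfpos : (0:ℝ) < d.factorial := by exact_mod_cast d.factorial_pos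
  set C : ℝ := d.factorial * ∏ i, a i with hCdef
  have hCpos : 0 < C := by positivity
  set A : ℝ := ∑ i, a i with hAdef
  have hA0 : 0 ≤ A := Finset.sum_nonneg fun i _ => (ha i).le
  have hcard : ∀ n : ℕ, ((T n).card : ℝ) = (Nat.card (Sset a n) : ℝ) := by
    intro n
    have hTS : (T n : Set (Fin d → ℕ)) = Sset a n := by
      ext x
      rw [Finset.mem_coe, hT n x]
      rfl
    rw [← hTS, Nat.card_coe_set_eq, Set.ncard_coe_finset]
  have hlim : Tendsto (fun n : ℕ => ((n:ℝ) - A) ^ d / ((n:ℝ) ^ d * C)) atTop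
      (nhds (1/C)) := by
    have h1 : Tendsto (fun n : ℕ => (1 - A / (n:ℝ)) ^ d / C) atTop (nhds (1/C)) := by
      have h2 := ((tendsto_const_nhds (x := (1:ℝ)) (f := atTop (α := ℕ))).sub
        (tendsto_const_div_atTop_nhds_zero_nat A)).pow d
      have h3 := h2.div_const C
      simpa using h3
    refine h1.congr' ?_
    filter_upwards [eventually_ge_atTop 1] with n hn
    have hn0 : (0:ℝ) < n := by exact_mod_cast hn
    have e1 : (1 - A/(n:ℝ)) = ((n:ℝ) - A)/n := by field_simp
    rw [e1, div_pow, div_div]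
  refine tendsto_of_tendsto_of_tendsto_of_le_of_le' hlim
    (tendsto_const_nhds (x := 1/C) (f := atTop (α := ℕ))) ?_ ?_
  · filter_upwards [eventually_ge_atTop (max 1 ⌈A⌉₊)] with n hn
    have hn1 : 1 ≤ n := le_trans (le_max_left _ _) hn
    have hn0 : (0:ℝ) < n := by exact_mod_cast hn1
    have hnd : (0:ℝ) < (n:ℝ) ^ d := by positivity
    have hAn : A ≤ (n:ℝ) := by
      have h1 : (⌈A⌉₊ : ℝ) ≤ n := by exact_mod_cast le_trans (le_max_right _ _) hn
      exact (Nat.le_ceil A).trans h1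
    have hlow := Sset_lower d a ha n hAn
    rw [← hAdef, ← hCdef] at hlow
    rw [hcard n, div_le_div_iff₀ (by positivity) hnd]
    nlinarith [mul_le_mul_of_nonneg_right hlow hnd.le]
  · filter_upwards [eventually_ge_atTop 1] with n hn
    have hn0 : (0:ℝ) < n := by exact_mod_cast hn
    have hnd : (0:ℝ) < (n:ℝ) ^ d := by positivity
    have hup := Sset_upper d a ha n (by positivity)
    rw [← hCdef] at hup
    rw [hcard n, div_le_div_iff₀ hnd hCpos]
    nlinarith [mul_le_mul_of_nonneg_right hup hCpos.le, hup]
end
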